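/- Assume ρ < 1 and let (γ_i)_{i≥0}, (δ_i)_{i≥0} be the compensation sequences: γ₀ = ρ², for each i ≥ 0, δ_i is the unique complex number with 0 < |δ_i| < |γ_i| such that (γ_i, δ_i) satisfies the kernel equation, and γ_{i+1} is the unique complex number with 0 < |γ_{i+1}| < |δ_i| such that (γ_{i+1}, δ_i) satisfies the kernel equation. Then for all i ≥ 0: |γ_i| ≤ (0.4)^i · ρ² and |δ_i| ≤ (1/2)·(0.4)^i · ρ². -/

import Mathlib

/-!
Write the kernel equation as `k γδ = e γ² + (e γ + c) δ² + b δ³` with `e = λ̄aā`, `b = λaā`,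
`c = λ(a² + ā²) = 2eρ` and `k = c + (2 - λ)aā`. Taking norms, the ratio `s = |δ|/|γ|` satisfies
`ψ(s) ≤ e` for the cubic `ψ(s) = k s - (e|γ| + c) s² - b|γ| s³`, which is concave on `s ≥ 0`.
Since `|γ| ≤ ρ²` and `ψ` exceeds `e` both at `s = 1` and at `s = σ` (`σ = 1/2`, or `σ = 2/5` when
`ρ > 1/2`), concavity forces `|δ| ≤ σ|γ|`. For fixed `δ` the kernel equation is quadratic in `γ`,
so by Vieta `e γ γ' = c δ² + b δ³` for its two roots, whence `|γ| |γ'| ≤ ρ (2 + |δ|) |δ|² ≤ (2/5) |γ|²`.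
Induction on `i` gives the geometric decay.
-/

/-- The load ρ = λ(ā²+a²)/(2λ̄āa). -/
noncomputable def rhoLoad (a lam : ℝ) : ℝ :=
  lam * ((1-a)^2 + a^2) / (2 * (1-lam) * (1-a) * a)

/-- The kernel equation in (γ, δ) ∈ ℂ². -/
def Kernel (a lam : ℝ) (g d : ℂ) : Prop :=
  (1 - ((1-(lam:ℂ))*((1-(a:ℂ))^2+(a:ℂ)^2) + (lam:ℂ)*(a:ℂ)*(1-(a:ℂ)))) * g * d
    = ((1-(lam:ℂ))*(1-(a:ℂ))*(a:ℂ)*g + (lam:ℂ)*((a:ℂ)^2+(1-(a:ℂ))^2)) * d^2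
      + (lam:ℂ)*(1-(a:ℂ))*(a:ℂ)*d^3 + (1-(lam:ℂ))*(1-(a:ℂ))*(a:ℂ)*g^2

def CubicKernel (e b c k : ℝ) (g d : ℂ) : Prop :=
  (k : ℂ) * g * d = e * g ^ 2 + (e * g + c) * d ^ 2 + b * d ^ 3

theorem le_of_cubic_le_of_lt {e k p q s σ : ℝ} (hp : 0 ≤ p) (hq : 0 ≤ q) (hσ : 0 ≤ σ)
    (hs : s < 1) (hψs : k * s - p * s ^ 2 - q * s ^ 3 ≤ e)
    (hψσ : e < k * σ - p * σ ^ 2 - q * σ ^ 3) (hψ1 : e < k - p - q) : s ≤ σ := by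
  by_contra! hσs
  -- concavity of `ψ` on `[σ, 1]`: `ψ s` lies above the chord through `(σ, ψ σ)` and `(1, ψ 1)`
  have hconcave : (1 - σ) * (k * s - p * s ^ 2 - q * s ^ 3)
      - (1 - s) * (k * σ - p * σ ^ 2 - q * σ ^ 3) - (s - σ) * (k - p - q)
      = (s - σ) * (1 - s) * (1 - σ) * (p + q * (s + 1 + σ)) := by ring
  have hchord : 0 ≤ (s - σ) * (1 - s) * (1 - σ) * (p + q * (s + 1 + σ)) := by
    have h1 : 0 ≤ p + q * (s + 1 + σ) := add_nonneg hp (mul_nonneg hq (by linarith))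
    have h2 : 0 ≤ (s - σ) * (1 - s) * (1 - σ) :=
      mul_nonneg (mul_nonneg (by linarith) (by linarith)) (by linarith)
    exact mul_nonneg h2 h1
  linarith [mul_lt_mul_of_pos_left hψσ (sub_pos.2 hs), mul_lt_mul_of_pos_left hψ1 (sub_pos.2 hσs),
    mul_le_mul_of_nonneg_left hψs (show 0 ≤ 1 - σ by linarith)]

namespace CubicKernel

variable {e b c k : ℝ} {g g' d : ℂ}

theorem norm_le (he : 0 ≤ e) (hb : 0 ≤ b) (hc : 0 ≤ c) (hK : CubicKernel e b c k g d) :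
    k * ‖g‖ * ‖d‖ ≤ e * ‖g‖ ^ 2 + (e * ‖g‖ + c) * ‖d‖ ^ 2 + b * ‖d‖ ^ 3 :=
  calc k * ‖g‖ * ‖d‖ ≤ ‖(k : ℂ) * g * d‖ := by
        rw [norm_mul, norm_mul, Complex.norm_real]
        gcongr
        exact Real.le_norm_self k
    _ = ‖(e : ℂ) * g ^ 2 + ((e : ℂ) * g + c) * d ^ 2 + (b : ℂ) * d ^ 3‖ := by rw [hK]
    _ ≤ ‖(e : ℂ) * g ^ 2‖ + ‖((e : ℂ) * g + c) * d ^ 2‖ + ‖(b : ℂ) * d ^ 3‖ := norm_add₃_le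
    _ ≤ _ := by
        gcongr
        · simp [abs_of_nonneg he]
        · rw [norm_mul, norm_pow]
          gcongr
          exact (norm_add_le _ _).trans (by simp [abs_of_nonneg he, abs_of_nonneg hc])
        · simp [abs_of_nonneg hb]

theorem mul_eq_of_ne (hK : CubicKernel e b c k g d) (hK' : CubicKernel e b c k g' d)
    (hne : g ≠ g') : (e : ℂ) * (g * g') = c * d ^ 2 + b * d ^ 3 := by
  unfold CubicKernel at hK hK'
  have hsum : (e : ℂ) * (g + g') = k * d - e * d ^ 2 := by
    apply mul_left_cancel₀ (sub_ne_zero.2 hne)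
    linear_combination hK' - hK
  linear_combination hK + g * hsum

theorem norm_mul_le (he : 0 ≤ e) (hb : 0 ≤ b) (hc : 0 ≤ c) (hK : CubicKernel e b c k g d)
    (hK' : CubicKernel e b c k g' d) (hne : g ≠ g') :
    e * (‖g‖ * ‖g'‖) ≤ c * ‖d‖ ^ 2 + b * ‖d‖ ^ 3 :=
  calc e * (‖g‖ * ‖g'‖) = ‖(e : ℂ) * (g * g')‖ := by simp [abs_of_nonneg he]
    _ = ‖(c : ℂ) * d ^ 2 + b * d ^ 3‖ := by rw [hK.mul_eq_of_ne hK' hne]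
    _ ≤ _ := (norm_add_le _ _).trans (by simp [abs_of_nonneg hb, abs_of_nonneg hc])

theorem norm_right_le {R σ : ℝ} (he : 0 ≤ e) (hb : 0 ≤ b) (hc : 0 ≤ c)
    (hK : CubicKernel e b c k g d) (hdg : ‖d‖ < ‖g‖) (hgR : ‖g‖ ≤ R) (hσ : 0 ≤ σ)
    (hψσ : e < k * σ - (e * R + c) * σ ^ 2 - b * R * σ ^ 3)
    (hψ1 : e < k - (e * R + c) - b * R) :
    ‖d‖ ≤ σ * ‖g‖ := by
  have hg : 0 < ‖g‖ := (norm_nonneg d).trans_lt hdg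
  have hR : 0 ≤ R := hg.le.trans hgR
  set s := ‖d‖ / ‖g‖
  have hd : ‖d‖ = s * ‖g‖ := (div_mul_cancel₀ _ hg.ne').symm
  have hs0 : 0 ≤ s := by positivity
  have hψs : k * s - (e * ‖g‖ + c) * s ^ 2 - b * ‖g‖ * s ^ 3 ≤ e := by
    have h := hK.norm_le he hb hc
    rw [hd] at h
    refine le_of_mul_le_mul_right ?_ (by positivity : 0 < ‖g‖ ^ 2)
    linear_combination h
  have hψsR : k * s - (e * R + c) * s ^ 2 - b * R * s ^ 3 ≤ e := by
    nlinarith [mul_nonneg (mul_nonneg he (sub_nonneg.2 hgR)) (sq_nonneg s),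
      mul_nonneg (mul_nonneg hb (sub_nonneg.2 hgR)) (pow_nonneg hs0 3)]
  rw [hd]
  gcongr
  exact le_of_cubic_le_of_lt (add_nonneg (mul_nonneg he hR) hc) (mul_nonneg hb hR) hσ
    ((div_lt_one hg).2 hdg) hψsR hψσ hψ1

end CubicKernel

section Coefficients

variable {a lam : ℝ}

def kernelE (a lam : ℝ) : ℝ := (1 - lam) * ((1 - a) * a)

def kernelB (a lam : ℝ) : ℝ := lam * ((1 - a) * a)

def kernelC (a lam : ℝ) : ℝ := lam * ((1 - a) ^ 2 + a ^ 2)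

def kernelK (a lam : ℝ) : ℝ := 1 - ((1 - lam) * ((1 - a) ^ 2 + a ^ 2) + lam * a * (1 - a))

theorem kernel_iff_cubicKernel {g d : ℂ} :
    Kernel a lam g d ↔
      CubicKernel (kernelE a lam) (kernelB a lam) (kernelC a lam) (kernelK a lam) g d := by
  unfold Kernel CubicKernel kernelE kernelB kernelC kernelK
  push_cast
  constructor <;> intro h <;> linear_combination h

theorem kernelE_pos (ha : 0 < a) (ha1 : a < 1) (hl1 : lam < 1) : 0 < kernelE a lam :=
  mul_pos (sub_pos.2 hl1) (mul_pos (sub_pos.2 ha1) ha)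

theorem kernelB_nonneg (ha : 0 ≤ a) (ha1 : a ≤ 1) (hl : 0 ≤ lam) : 0 ≤ kernelB a lam :=
  mul_nonneg hl (mul_nonneg (sub_nonneg.2 ha1) ha)

theorem kernelC_nonneg (hl : 0 ≤ lam) : 0 ≤ kernelC a lam := by
  unfold kernelC
  positivity

theorem rhoLoad_pos (ha : 0 < a) (ha1 : a < 1) (hl : 0 < lam) (hl1 : lam < 1) :
    0 < rhoLoad a lam := by
  unfold rhoLoad
  have := sub_pos.2 hl1
  have := sub_pos.2 ha1
  positivity

theorem kernelC_eq (ha : 0 < a) (ha1 : a < 1) (hl1 : lam < 1) :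
    kernelC a lam = 2 * kernelE a lam * rhoLoad a lam := by
  have := (sub_pos.2 hl1).ne'
  have := (sub_pos.2 ha1).ne'
  unfold kernelC kernelE rhoLoad
  field_simp

theorem kernelB_le (ha : 0 < a) (ha1 : a < 1) (hl : 0 < lam) (hl1 : lam < 1) :
    kernelB a lam ≤ kernelE a lam * rhoLoad a lam := by
  have h2bc : 2 * kernelB a lam ≤ kernelC a lam := by
    unfold kernelB kernelC
    nlinarith [sq_nonneg (1 - 2 * a)]
  linarith [kernelC_eq ha ha1 hl1]

noncomputable def kernelPsi (a lam s : ℝ) : ℝ :=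
  kernelK a lam * s - (kernelE a lam * rhoLoad a lam ^ 2 + kernelC a lam) * s ^ 2
    - kernelB a lam * rhoLoad a lam ^ 2 * s ^ 3

theorem kernelPsi_sub_kernelE (ha : 0 < a) (ha1 : a < 1) (hl1 : lam < 1) (s : ℝ) :
    kernelPsi a lam s - kernelE a lam = (1 - a) * a * ((1 - lam) *
      (2 * s * (1 + rhoLoad a lam) - rhoLoad a lam * (rhoLoad a lam + 2) * s ^ 2 - 1)
        + lam * s * (1 - rhoLoad a lam ^ 2 * s ^ 2)) := by
  have hk : kernelK a lam = kernelC a lam + (2 - lam) * ((1 - a) * a) := by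
    unfold kernelK kernelC
    ring
  rw [kernelPsi, hk, kernelC_eq ha ha1 hl1]
  unfold kernelE kernelB
  ring

theorem kernelE_lt_kernelPsi (ha : 0 < a) (ha1 : a < 1) (hl : 0 < lam) (hl1 : lam < 1)
    (hρ : rhoLoad a lam < 1) {s : ℝ} (hs0 : 0 < s) (hs1 : s ≤ 1)
    (hs : 1 ≤ 2 * s * (1 + rhoLoad a lam) - rhoLoad a lam * (rhoLoad a lam + 2) * s ^ 2) :
    kernelE a lam < kernelPsi a lam s := by
  have hρ0 := rhoLoad_pos ha ha1 hl hl1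
  have hρs : rhoLoad a lam ^ 2 * s ^ 2 < 1 := by
    rw [← mul_pow]
    exact pow_lt_one₀ (by positivity) (by nlinarith) two_ne_zero
  have hpos : 0 < (1 - a) * a * ((1 - lam) *
      (2 * s * (1 + rhoLoad a lam) - rhoLoad a lam * (rhoLoad a lam + 2) * s ^ 2 - 1)
        + lam * s * (1 - rhoLoad a lam ^ 2 * s ^ 2)) := by
    have := sub_pos.2 ha1
    have := sub_nonneg.2 hs
    have := sub_pos.2 hl1
    have := sub_pos.2 hρs
    positivity
  linarith [kernelPsi_sub_kernelE ha ha1 hl1 s]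

end Coefficients

section Compensation

variable {a lam : ℝ} {g g' d : ℂ}

theorem Kernel.norm_mul_norm_le (ha : 0 < a) (ha1 : a < 1) (hl : 0 < lam) (hl1 : lam < 1)
    (hK : Kernel a lam g d) (hK' : Kernel a lam g' d) (hne : g ≠ g') :
    ‖g‖ * ‖g'‖ ≤ rhoLoad a lam * (2 + ‖d‖) * ‖d‖ ^ 2 := by
  have he := kernelE_pos ha ha1 hl1
  have hρ0 := rhoLoad_pos ha ha1 hl hl1
  have h := (kernel_iff_cubicKernel.1 hK).norm_mul_le he.le (kernelB_nonneg ha.le ha1.le hl.le)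
    (kernelC_nonneg hl.le) (kernel_iff_cubicKernel.1 hK') hne
  refine le_of_mul_le_mul_left ?_ he
  calc kernelE a lam * (‖g‖ * ‖g'‖)
      ≤ kernelC a lam * ‖d‖ ^ 2 + kernelB a lam * ‖d‖ ^ 3 := h
    _ ≤ 2 * kernelE a lam * rhoLoad a lam * ‖d‖ ^ 2
        + kernelE a lam * rhoLoad a lam * ‖d‖ ^ 3 := by
      rw [kernelC_eq ha ha1 hl1]
      gcongr
      exact kernelB_le ha ha1 hl hl1
    _ = kernelE a lam * (rhoLoad a lam * (2 + ‖d‖) * ‖d‖ ^ 2) := by ring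

theorem compensation_step (ha : 0 < a) (ha1 : a < 1) (hl : 0 < lam) (hl1 : lam < 1)
    (hρ : rhoLoad a lam < 1) (hK : Kernel a lam g d) (hK' : Kernel a lam g' d)
    (hdg : ‖d‖ < ‖g‖) (hg'd : ‖g'‖ < ‖d‖) (hgρ : ‖g‖ ≤ rhoLoad a lam ^ 2) :
    ‖d‖ ≤ 1 / 2 * ‖g‖ ∧ ‖g'‖ ≤ 2 / 5 * ‖g‖ := by
  have hρ0 := rhoLoad_pos ha ha1 hl hl1
  have hg : 0 < ‖g‖ := (norm_nonneg d).trans_lt hdg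
  obtain ⟨σ, hσ0, hσ, hψσ, hdecay⟩ : ∃ σ : ℝ, 0 < σ ∧ σ ≤ 1 / 2 ∧
      kernelE a lam < kernelPsi a lam σ ∧
      rhoLoad a lam * σ ^ 2 * (2 + σ * rhoLoad a lam ^ 2) ≤ 2 / 5 := by
    rcases le_or_gt (rhoLoad a lam) (1 / 2) with hρ2 | hρ2
    · exact ⟨1 / 2, by norm_num, le_rfl,
        kernelE_lt_kernelPsi ha ha1 hl hl1 hρ (by norm_num) (by norm_num) (by nlinarith),
        by nlinarith⟩
    · exact ⟨2 / 5, by norm_num, by norm_num,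
        kernelE_lt_kernelPsi ha ha1 hl hl1 hρ (by norm_num) (by norm_num) (by nlinarith),
        by nlinarith⟩
  have hψ1 := kernelE_lt_kernelPsi ha ha1 hl hl1 hρ one_pos le_rfl (by nlinarith)
  simp only [kernelPsi, mul_one, one_pow] at hψ1
  have hd : ‖d‖ ≤ σ * ‖g‖ :=
    (kernel_iff_cubicKernel.1 hK).norm_right_le (kernelE_pos ha ha1 hl1).le
      (kernelB_nonneg ha.le ha1.le hl.le) (kernelC_nonneg hl.le) hdg hgρ hσ0.le hψσ hψ1
  refine ⟨hd.trans (by gcongr), le_of_mul_le_mul_left ?_ hg⟩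
  have hne : g ≠ g' := fun h => by rw [h] at hdg; linarith
  calc ‖g‖ * ‖g'‖ ≤ rhoLoad a lam * (2 + ‖d‖) * ‖d‖ ^ 2 :=
        hK.norm_mul_norm_le ha ha1 hl hl1 hK' hne
    _ ≤ rhoLoad a lam * (2 + σ * rhoLoad a lam ^ 2) * (σ * ‖g‖) ^ 2 := by
        gcongr
        exact hd.trans (by gcongr)
    _ = rhoLoad a lam * σ ^ 2 * (2 + σ * rhoLoad a lam ^ 2) * ‖g‖ ^ 2 := by ring
    _ ≤ 2 / 5 * ‖g‖ ^ 2 := by gcongr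
    _ = ‖g‖ * (2 / 5 * ‖g‖) := by ring

end Compensation

theorem stmt7_general (a lam : ℝ) (ha : 0 < a) (ha1 : a < 1) (hl : 0 < lam) (hl1 : lam < 1)
    (hρ : rhoLoad a lam < 1)
    (g d : ℕ → ℂ)
    (hg0 : g 0 = (((rhoLoad a lam)^2 : ℝ) : ℂ))
    (hd : ∀ i : ℕ, 0 < ‖d i‖ ∧ ‖d i‖ < ‖g i‖ ∧
      Kernel a lam (g i) (d i))
    (hg : ∀ i : ℕ, 0 < ‖g (i+1)‖ ∧
      ‖g (i+1)‖ < ‖d i‖ ∧ Kernel a lam (g (i+1)) (d i)) :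
    ∀ i : ℕ, ‖g i‖ ≤ (0.4:ℝ)^i * (rhoLoad a lam)^2 ∧
      ‖d i‖ ≤ (1/2) * (0.4:ℝ)^i * (rhoLoad a lam)^2 := by
  have hpow (i : ℕ) : (0.4 : ℝ) ^ i * rhoLoad a lam ^ 2 ≤ rhoLoad a lam ^ 2 :=
    mul_le_of_le_one_left (sq_nonneg _) (pow_le_one₀ (by norm_num) (by norm_num))
  have step (i : ℕ) (hi : ‖g i‖ ≤ rhoLoad a lam ^ 2) :=
    compensation_step ha ha1 hl hl1 hρ (hd i).2.2 (hg i).2.2 (hd i).2.1 (hg i).2.1 hi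
  have hgi (i : ℕ) : ‖g i‖ ≤ (0.4 : ℝ) ^ i * rhoLoad a lam ^ 2 := by
    induction i with
    | zero => simp [hg0]
    | succ n ih =>
      calc ‖g (n + 1)‖ ≤ 2 / 5 * ‖g n‖ := (step n (ih.trans (hpow n))).2
        _ ≤ 2 / 5 * ((0.4 : ℝ) ^ n * rhoLoad a lam ^ 2) := by gcongr
        _ = (0.4 : ℝ) ^ (n + 1) * rhoLoad a lam ^ 2 := by norm_num [pow_succ]; ring
  intro i
  refine ⟨hgi i, ?_⟩
  calc ‖d i‖ ≤ 1 / 2 * ‖g i‖ := (step i ((hgi i).trans (hpow i))).1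
    _ ≤ 1 / 2 * (0.4 : ℝ) ^ i * rhoLoad a lam ^ 2 := by
      rw [mul_assoc]
      gcongr
      exact hgi i

/-- geometric decay of the compensation sequences:
|γ_i| ≤ 0.4^i ρ² and |δ_i| ≤ (1/2) 0.4^i ρ². -/
theorem stmt7 (a lam : ℝ) (ha : 0 < a) (ha1 : a < 1) (hl : 0 < lam) (hl1 : lam < 1)
    (hρ : rhoLoad a lam < 1)
    (g d : ℕ → ℂ)
    (hg0 : g 0 = (((rhoLoad a lam)^2 : ℝ) : ℂ))
    (hd : ∀ i : ℕ, 0 < ‖d i‖ ∧ ‖d i‖ < ‖g i‖ ∧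
      Kernel a lam (g i) (d i))
    (hdu : ∀ i : ℕ, ∀ z : ℂ, 0 < ‖z‖ → ‖z‖ < ‖g i‖ →
      Kernel a lam (g i) z → z = d i)
    (hg : ∀ i : ℕ, 0 < ‖g (i+1)‖ ∧
      ‖g (i+1)‖ < ‖d i‖ ∧ Kernel a lam (g (i+1)) (d i))
    (hgu : ∀ i : ℕ, ∀ z : ℂ, 0 < ‖z‖ → ‖z‖ < ‖d i‖ →
      Kernel a lam z (d i) → z = g (i+1)) :
    ∀ i : ℕ, ‖g i‖ ≤ (0.4:ℝ)^i * (rhoLoad a lam)^2 ∧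
      ‖d i‖ ≤ (1/2) * (0.4:ℝ)^i * (rhoLoad a lam)^2 :=
  stmt7_general a lam ha ha1 hl hl1 hρ g d hg0 hd hg
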